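/- Let m, n be positive integers and let A ∈ ℝ^{(mn)×(mn)} be symmetric positive definite, with rows and columns indexed by pairs (i,j) with 1 ≤ i ≤ m, 1 ≤ j ≤ n. Let Q_L ∈ ℝ^{m×m} and Q_R ∈ ℝ^{n×n} be orthogonal, let G ∈ ℝ^{m×n}, and let p > 0. Define D ∈ ℝ^{m×n} by D_{i,j} = ((Q_R ⊗ Q_L)ᵀ A (Q_R ⊗ Q_L))_{(i,j),(i,j)}, and define the eigenvalue-corrected Shampoo update U = Q_L (D^{⊙(-p)} ⊙ (Q_Lᵀ G Q_R)) Q_Rᵀ. Then λ_max(A)^{-p} · ‖G‖_F ≤ ‖U‖_F ≤ λ_min(A)^{-p} · ‖G‖_F, where λ_min(A) and λ_max(A) are the smallest and largest eigenvalues of A. -/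

import Mathlib

/-!
Conjugation by orthogonal matrices preserves the Frobenius norm, so `‖U‖_F` and `‖G‖_F` are the
Frobenius norms of `D^{⊙(-p)} ⊙ H` and `H`, where `H = Q_Lᵀ G Q_R`. Each `D_{ij}` is the Rayleigh
quotient of `A` at a unit column of the orthogonal matrix `Q_R ⊗ Q_L`, hence lies in
`[λ_min, λ_max]`; since `λ_min > 0` and `p > 0`, every weight `D_{ij}^{-p}` lies in
`[λ_max^{-p}, λ_min^{-p}]`, and entrywise weights in `[a, b]` scale the Frobenius norm by a factor
in `[a, b]`.
-/

open Matrix Finset Kronecker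

/-- Frobenius norm of a real matrix: square root of the sum of squares of all entries. -/
noncomputable def frobeniusNorm' {m n : Type*} [Fintype m] [Fintype n]
    (M : Matrix m n ℝ) : ℝ :=
  Real.sqrt (∑ i, ∑ j, (M i j) ^ 2)

namespace Matrix.IsHermitian

variable {N : Type*} [Fintype N] [DecidableEq N] {A : Matrix N N ℝ} (hA : A.IsHermitian)

theorem dotProduct_mulVec_eq_sum_eigenvalues (x : N → ℝ) :
    x ⬝ᵥ A *ᵥ x = ∑ k, hA.eigenvalues k * ((hA.eigenvectorUnitary : Matrix N N ℝ)ᵀ *ᵥ x) k ^ 2 := by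
  set C : Matrix N N ℝ := ↑hA.eigenvectorUnitary
  have hA' : A = C * diagonal hA.eigenvalues * Cᵀ := by
    conv_lhs => rw [hA.spectral_theorem, Unitary.conjStarAlgAut_apply]
    rfl
  conv_lhs => rw [hA', ← mulVec_mulVec, ← mulVec_mulVec, dotProduct_mulVec, ← mulVec_transpose]
  simp only [dotProduct, mulVec_diagonal, sq, mul_left_comm]

theorem dotProduct_self_transpose_eigenvectorUnitary_mulVec (x : N → ℝ) :
    ((hA.eigenvectorUnitary : Matrix N N ℝ)ᵀ *ᵥ x) ⬝ᵥ
      ((hA.eigenvectorUnitary : Matrix N N ℝ)ᵀ *ᵥ x) = x ⬝ᵥ x := by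
  rw [dotProduct_mulVec, vecMul_transpose, mulVec_mulVec, ← conjTranspose_eq_transpose_of_trivial,
    ← star_eq_conjTranspose, Unitary.mul_star_self_of_mem hA.eigenvectorUnitary.2, one_mulVec]

theorem mul_dotProduct_self_le_dotProduct_mulVec {c : ℝ} (hc : ∀ k, c ≤ hA.eigenvalues k)
    (x : N → ℝ) : c * (x ⬝ᵥ x) ≤ x ⬝ᵥ A *ᵥ x := by
  rw [hA.dotProduct_mulVec_eq_sum_eigenvalues,
    ← hA.dotProduct_self_transpose_eigenvectorUnitary_mulVec]
  simp only [dotProduct, ← sq, mul_sum]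
  gcongr with k
  exact hc k

theorem dotProduct_mulVec_le_mul_dotProduct_self {c : ℝ} (hc : ∀ k, hA.eigenvalues k ≤ c)
    (x : N → ℝ) : x ⬝ᵥ A *ᵥ x ≤ c * (x ⬝ᵥ x) := by
  rw [hA.dotProduct_mulVec_eq_sum_eigenvalues,
    ← hA.dotProduct_self_transpose_eigenvectorUnitary_mulVec]
  simp only [dotProduct, ← sq, mul_sum]
  gcongr with k
  exact hc k

theorem transpose_mul_mul_apply_self_mem_Icc {K : Type*} [Fintype K] [DecidableEq K] {a b : ℝ}
    (ha : ∀ k, a ≤ hA.eigenvalues k) (hb : ∀ k, hA.eigenvalues k ≤ b) {Q : Matrix N K ℝ}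
    (hQ : Qᵀ * Q = 1) (k : K) : (Qᵀ * A * Q) k k ∈ Set.Icc a b := by
  have hunit : Qᵀ k ⬝ᵥ Qᵀ k = 1 := by rw [← one_apply_eq k, ← hQ]; rfl
  have hdiag : (Qᵀ * A * Q) k k = Qᵀ k ⬝ᵥ A *ᵥ Qᵀ k := by rw [Matrix.mul_assoc]; rfl
  rw [hdiag]
  exact ⟨by simpa only [hunit, mul_one] using hA.mul_dotProduct_self_le_dotProduct_mulVec ha (Qᵀ k),
    by simpa only [hunit, mul_one] using hA.dotProduct_mulVec_le_mul_dotProduct_self hb (Qᵀ k)⟩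

end Matrix.IsHermitian

section frobeniusNorm'

variable {m n : Type*} [Fintype m] [Fintype n]

theorem frobeniusNorm'_transpose (M : Matrix m n ℝ) : frobeniusNorm' Mᵀ = frobeniusNorm' M := by
  rw [frobeniusNorm', frobeniusNorm', sum_comm]
  rfl

theorem sum_sum_sq_eq_trace_transpose_mul (M : Matrix m n ℝ) :
    ∑ i, ∑ j, M i j ^ 2 = (Mᵀ * M).trace := by
  simp only [trace, Matrix.diag, mul_apply, transpose_apply, sq]
  exact sum_comm

theorem frobeniusNorm'_orthogonal_mul [DecidableEq m] {P : Matrix m m ℝ} (hP : Pᵀ * P = 1)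
    (M : Matrix m n ℝ) : frobeniusNorm' (P * M) = frobeniusNorm' M := by
  rw [frobeniusNorm', frobeniusNorm', sum_sum_sq_eq_trace_transpose_mul,
    sum_sum_sq_eq_trace_transpose_mul, transpose_mul, Matrix.mul_assoc, ← Matrix.mul_assoc Pᵀ,
    hP, Matrix.one_mul]

theorem frobeniusNorm'_mul_orthogonal [DecidableEq n] {P : Matrix n n ℝ} (hP : P * Pᵀ = 1)
    (M : Matrix m n ℝ) : frobeniusNorm' (M * P) = frobeniusNorm' M := by
  rw [← frobeniusNorm'_transpose, transpose_mul,
    frobeniusNorm'_orthogonal_mul (by rwa [transpose_transpose]), frobeniusNorm'_transpose]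

theorem frobeniusNorm'_orthogonal_mul_mul_orthogonal [DecidableEq m] [DecidableEq n]
    {P : Matrix m m ℝ} {R : Matrix n n ℝ} (hP : Pᵀ * P = 1) (hR : R * Rᵀ = 1)
    (M : Matrix m n ℝ) : frobeniusNorm' (P * M * R) = frobeniusNorm' M := by
  rw [frobeniusNorm'_mul_orthogonal hR, frobeniusNorm'_orthogonal_mul hP]

theorem frobeniusNorm'_smul (c : ℝ) (M : Matrix m n ℝ) :
    frobeniusNorm' (c • M) = |c| * frobeniusNorm' M := by
  simp only [frobeniusNorm', Matrix.smul_apply, smul_eq_mul, mul_pow, ← mul_sum]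
  rw [Real.sqrt_mul (sq_nonneg c), Real.sqrt_sq_eq_abs]

theorem frobeniusNorm'_le_of_abs_le {M M' : Matrix m n ℝ} (h : ∀ i j, |M i j| ≤ |M' i j|) :
    frobeniusNorm' M ≤ frobeniusNorm' M' :=
  Real.sqrt_le_sqrt <| sum_le_sum fun i _ => sum_le_sum fun j _ => sq_le_sq.mpr (h i j)

theorem frobeniusNorm'_hadamard_mem_Icc {a b : ℝ} (ha : 0 ≤ a) (hb : 0 ≤ b) {W : Matrix m n ℝ}
    (hW : ∀ i j, W i j ∈ Set.Icc a b) (M : Matrix m n ℝ) :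
    frobeniusNorm' (W ⊙ M) ∈ Set.Icc (a * frobeniusNorm' M) (b * frobeniusNorm' M) := by
  constructor
  · rw [← abs_of_nonneg ha, ← frobeniusNorm'_smul]
    refine frobeniusNorm'_le_of_abs_le fun i j => ?_
    simp only [Matrix.smul_apply, hadamard_apply, smul_eq_mul, abs_mul, abs_of_nonneg ha,
      abs_of_nonneg (ha.trans (hW i j).1)]
    exact mul_le_mul_of_nonneg_right (hW i j).1 (abs_nonneg _)
  · rw [← abs_of_nonneg hb, ← frobeniusNorm'_smul]
    refine frobeniusNorm'_le_of_abs_le fun i j => ?_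
    simp only [Matrix.smul_apply, hadamard_apply, smul_eq_mul, abs_mul, abs_of_nonneg hb,
      abs_of_nonneg (ha.trans (hW i j).1)]
    exact mul_le_mul_of_nonneg_right (hW i j).2 (abs_nonneg _)

end frobeniusNorm'

/-- Let `A ∈ ℝ^{(mn)×(mn)}` be symmetric positive definite (indexed by pairs
`(i,j)`), let `Q_L, Q_R` be orthogonal, `G ∈ ℝ^{m×n}`, `p > 0`.  With the eigenvalue correction
`D_{i,j} = ((Q_R ⊗ Q_L)ᵀ A (Q_R ⊗ Q_L))_{(i,j),(i,j)}` (note the paper's `Q_R ⊗ Q_L` is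
`QL ⊗ₖ QR` in Mathlib's pair-indexed convention) and the eigenvalue-corrected Shampoo update
`U = Q_L (D^{⊙(-p)} ⊙ (Q_Lᵀ G Q_R)) Q_Rᵀ`, one has
`λ_max(A)^{-p} ‖G‖_F ≤ ‖U‖_F ≤ λ_min(A)^{-p} ‖G‖_F`. -/
theorem stmt_4 (m n : ℕ) [NeZero m] [NeZero n]
    (A : Matrix (Fin m × Fin n) (Fin m × Fin n) ℝ) (hA : A.IsHermitian) (hApd : A.PosDef)
    (QL : Matrix (Fin m) (Fin m) ℝ) (QR : Matrix (Fin n) (Fin n) ℝ)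
    (hQL : QLᵀ * QL = 1) (hQR : QRᵀ * QR = 1)
    (G : Matrix (Fin m) (Fin n) ℝ) (p : ℝ) (hp : 0 < p)
    (D : Matrix (Fin m) (Fin n) ℝ)
    (hD : ∀ i j, D i j = ((QL ⊗ₖ QR)ᵀ * A * (QL ⊗ₖ QR)) (i, j) (i, j))
    (U : Matrix (Fin m) (Fin n) ℝ)
    (hU : U = QL * (Matrix.of fun i j => (D i j) ^ (-p) * ((QLᵀ * G * QR) i j)) * QRᵀ) :
    (Finset.univ.sup' Finset.univ_nonempty hA.eigenvalues) ^ (-p) * frobeniusNorm' G ≤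
        frobeniusNorm' U ∧
      frobeniusNorm' U ≤
        (Finset.univ.inf' Finset.univ_nonempty hA.eigenvalues) ^ (-p) * frobeniusNorm' G := by
  set lmin := univ.inf' univ_nonempty hA.eigenvalues
  set lmax := univ.sup' univ_nonempty hA.eigenvalues
  have hlmin_pos : 0 < lmin := by
    obtain ⟨k, -, hk⟩ := exists_mem_eq_inf' univ_nonempty hA.eigenvalues
    rw [show lmin = _ from hk]
    exact hApd.eigenvalues_pos k
  have hlmax_pos : 0 < lmax := by
    obtain ⟨k, -, hk⟩ := exists_mem_eq_sup' univ_nonempty hA.eigenvalues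
    rw [show lmax = _ from hk]
    exact hApd.eigenvalues_pos k
  have hQ : (QL ⊗ₖ QR)ᵀ * (QL ⊗ₖ QR) = 1 := by
    rw [← kroneckerMap_transpose, ← mul_kronecker_mul, hQL, hQR, one_kronecker_one]
  have hDp : ∀ i j, D.map (· ^ (-p)) i j ∈ Set.Icc (lmax ^ (-p)) (lmin ^ (-p)) := by
    intro i j
    obtain ⟨hlo, hhi⟩ := hD i j ▸ hA.transpose_mul_mul_apply_self_mem_Icc (a := lmin) (b := lmax)
      (fun k => inf'_le _ (mem_univ k)) (fun k => le_sup' _ (mem_univ k)) hQ (i, j)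
    exact ⟨Real.rpow_le_rpow_of_nonpos (hlmin_pos.trans_le hlo) hhi (neg_nonpos.mpr hp.le),
      Real.rpow_le_rpow_of_nonpos hlmin_pos hlo (neg_nonpos.mpr hp.le)⟩
  have hU' : frobeniusNorm' U = frobeniusNorm' (D.map (· ^ (-p)) ⊙ (QLᵀ * G * QR)) := by
    rw [hU]
    exact frobeniusNorm'_orthogonal_mul_mul_orthogonal hQL (by rwa [transpose_transpose]) _
  have hG : frobeniusNorm' (QLᵀ * G * QR) = frobeniusNorm' G :=
    frobeniusNorm'_orthogonal_mul_mul_orthogonal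
      (by rw [transpose_transpose]; exact mul_eq_one_comm.mp hQL) (mul_eq_one_comm.mp hQR) G
  rw [hU', ← hG]
  exact frobeniusNorm'_hadamard_mem_Icc (Real.rpow_nonneg hlmax_pos.le _)
    (Real.rpow_nonneg hlmin_pos.le _) hDp _
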